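/- arXiv:1708.04261 — 3 statements merged into one kernel-verified Lean document; each statement's English description precedes it below -/
import Mathlib

section
/- Exact cut recovery at binary points in the mixed case: let x̄ ∈ {0,1}^D with x̄_a = 0 for all a ∈ P₀, and let S = {a ∈ P₊ : x̄_a = 1}. If the affine function ∑_{a∈P₊} γ_a x_a + δ satisfies ∑_{a∈P₊} γ_a x̄_a + δ = h_{P₊}(S), then c · r(P₀) · [∑_{a∈P₊} γ_a x̄_a + δ − r(P₊)·∑_{a∈P₀} x̄_a] = h̄_P(x̄), where c = ∏_{a∈P\D} r_a, r(U) = ∏_{a∈U} r_a. Hence the inequality π ≥ c·r(P₀)·[∑ γ_a x_a + δ − r(P₊)∑_{a∈P₀} x_a] is tight at (x̄, h̄_P(x̄)). -/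
/-! Splitting `P` into `P \ D`, `P₊` and `P₀`, the right-hand side factors as
`c · r(P₀) · r(P₊) · ∏_{a ∈ P₊} (q_a/r_a)^{x̄_a}`, since the factors over `P₀` have exponent `0`.
For binary `x̄` the last product is `∏_{a ∈ S} q_a/r_a`, so the bracket on the left is
`h_{P₊}(S) = r(P₊) · ∏_{a ∈ S} q_a/r_a`, the correction term vanishing because `x̄ = 0` on `P₀`. -/

namespace Finset

variable {ι M : Type*} [CommMonoid M]

theorem prod_filter_pos_mul_prod_filter_eq_zero {R : Type*} [LinearOrder R] [Zero R]
    (s : Finset ι) (g : ι → R) (hg : ∀ a ∈ s, 0 ≤ g a) (f : ι → M) :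
    (∏ a ∈ s.filter (fun a => 0 < g a), f a) * ∏ a ∈ s.filter (fun a => g a = 0), f a
      = ∏ a ∈ s, f a := by
  have hzero : s.filter (fun a => g a = 0) = s.filter (fun a => ¬ 0 < g a) :=
    filter_congr fun a ha => by simp only [not_lt, (hg a ha).ge_iff_eq']
  rw [hzero, prod_filter_mul_prod_filter_not]

theorem prod_pow_eq_prod_filter_of_binary (s : Finset ι) (f : ι → M) (x : ι → ℕ)
    (hx : ∀ a ∈ s, x a = 0 ∨ x a = 1) :
    ∏ a ∈ s, f a ^ x a = ∏ a ∈ s.filter (fun a => x a = 1), f a := by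
  rw [prod_filter]
  refine prod_congr rfl fun a ha => ?_
  rcases hx a ha with h | h <;> simp [h]

end Finset

open Finset

theorem mixed_case_exact_cut_general
    {ι : Type*} [DecidableEq ι]
    (D P : Finset ι)
    (r q : ι → ℝ)
    (hq : ∀ a ∈ D, 0 ≤ q a ∧ q a < r a)
    (Pp P0 : Finset ι)
    (hPp : Pp = (P ∩ D).filter (fun a => 0 < q a))
    (hP0 : P0 = (P ∩ D).filter (fun a => q a = 0))
    (xbar : ι → ℕ) (hx : ∀ a ∈ D, xbar a = 0 ∨ xbar a = 1)
    (hx0 : ∀ a ∈ P0, xbar a = 0)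
    (S : Finset ι) (hS : S = Pp.filter (fun a => xbar a = 1))
    (γ : ι → ℝ) (δ : ℝ)
    (haffine : (∑ a ∈ Pp, γ a * (xbar a : ℝ)) + δ
      = (∏ a ∈ Pp, r a) * ∏ a ∈ S, (q a / r a)) :
    (∏ a ∈ P \ D, r a) * (∏ a ∈ P0, r a) *
      ((∑ a ∈ Pp, γ a * (xbar a : ℝ)) + δ
        - (∏ a ∈ Pp, r a) * ∑ a ∈ P0, (xbar a : ℝ))
      = (∏ a ∈ P, r a) * ∏ a ∈ P ∩ D, (q a / r a) ^ (xbar a) := by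
  have hsplit (f : ι → ℝ) : (∏ a ∈ Pp, f a) * ∏ a ∈ P0, f a = ∏ a ∈ P ∩ D, f a := by
    rw [hPp, hP0]
    exact prod_filter_pos_mul_prod_filter_eq_zero _ q (fun a ha => (hq a (mem_inter.1 ha).2).1) f
  have hsum0 : ∑ a ∈ P0, (xbar a : ℝ) = 0 := sum_eq_zero fun a ha => by simp [hx0 a ha]
  have hpow0 : ∏ a ∈ P0, (q a / r a) ^ xbar a = 1 := prod_eq_one fun a ha => by simp [hx0 a ha]
  have hpowPp : ∏ a ∈ Pp, (q a / r a) ^ xbar a = ∏ a ∈ S, q a / r a := by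
    rw [hS]
    refine prod_pow_eq_prod_filter_of_binary _ _ xbar fun a ha => hx a ?_
    rw [hPp] at ha
    exact (mem_inter.1 (mem_filter.1 ha).1).2
  rw [haffine, hsum0, ← prod_inter_mul_prod_sdiff P D, ← hsplit, ← hsplit, hpow0, hpowPp]
  ring

/-- Exact cut recovery at binary points in the mixed case. -/
theorem mixed_case_exact_cut
    {ι : Type*} [DecidableEq ι]
    (A D P : Finset ι) (hD : D ⊆ A) (hP : P ⊆ A)
    (r q : ι → ℝ)
    (hr : ∀ a ∈ A, 0 < r a ∧ r a ≤ 1)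
    (hq : ∀ a ∈ D, 0 ≤ q a ∧ q a < r a)
    (Pp P0 : Finset ι)
    (hPp : Pp = (P ∩ D).filter (fun a => 0 < q a))
    (hP0 : P0 = (P ∩ D).filter (fun a => q a = 0))
    (xbar : ι → ℕ) (hx : ∀ a ∈ D, xbar a = 0 ∨ xbar a = 1)
    (hx0 : ∀ a ∈ P0, xbar a = 0)
    (S : Finset ι) (hS : S = Pp.filter (fun a => xbar a = 1))
    (γ : ι → ℝ) (δ : ℝ)
    (haffine : (∑ a ∈ Pp, γ a * (xbar a : ℝ)) + δ
      = (∏ a ∈ Pp, r a) * ∏ a ∈ S, (q a / r a)) :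
    (∏ a ∈ P \ D, r a) * (∏ a ∈ P0, r a) *
      ((∑ a ∈ Pp, γ a * (xbar a : ℝ)) + δ
        - (∏ a ∈ Pp, r a) * ∑ a ∈ P0, (xbar a : ℝ))
      = (∏ a ∈ P, r a) * ∏ a ∈ P ∩ D, (q a / r a) ^ (xbar a) :=
  mixed_case_exact_cut_general D P r q hq Pp P0 hPp hP0 xbar hx hx0 S hS γ δ haffine
end

section
/- Equivalence of the linearized DP constraints and the bilinear DP inequalities at binary x: let x_a ∈ {0,1}, π_i, π_j ∈ ℝ with 0 ≤ π_j ≤ u_j, and 0 ≤ q_a < r_a ≤ 1. Then the pair of inequalities (π_i − r_a π_j ≥ −(r_a − q_a)·u_j·x_a) and (π_i − q_a π_j ≥ 0) holds if and only if π_i ≥ π_j·[r_a + (q_a − r_a)x_a]. -/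
/-!
At `x = 0` the bilinear inequality is the first cut `r πⱼ ≤ πᵢ`, which implies the second cut
because `q ≤ r` and `πⱼ ≥ 0`. At `x = 1` it is the second cut `q πⱼ ≤ πᵢ`, and the first cut
then follows from `πⱼ ≤ uⱼ`: `πᵢ - r πⱼ ≥ -(r - q) πⱼ ≥ -(r - q) uⱼ`.
-/

section

variable {R : Type*} [Field R] [LinearOrder R] [IsStrictOrderedRing R]

theorem dpCuts_iff_of_off {πi πj q r : R} (hπj : 0 ≤ πj) (hqr : q ≤ r) :
    (r * πj ≤ πi ∧ q * πj ≤ πi) ↔ r * πj ≤ πi :=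
  and_iff_left_of_imp fun h => (mul_le_mul_of_nonneg_right hqr hπj).trans h

theorem dpCuts_iff_of_on {πi πj uj q r : R} (hπj : πj ≤ uj) (hqr : q ≤ r) :
    (-(r - q) * uj ≤ πi - r * πj ∧ q * πj ≤ πi) ↔ q * πj ≤ πi := by
  refine and_iff_right_of_imp fun h => ?_
  have hgap : (r - q) * πj ≤ (r - q) * uj := mul_le_mul_of_nonneg_left hπj (sub_nonneg.2 hqr)
  linarith

end

theorem linearized_dp_equivalence_general
    (πi πj uj qa ra : ℝ) (x : ℕ)
    (hπj : 0 ≤ πj ∧ πj ≤ uj)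
    (hqr : qa < ra)
    (hx : x = 0 ∨ x = 1) :
    (πi - ra * πj ≥ -(ra - qa) * uj * (x : ℝ) ∧ πi - qa * πj ≥ 0) ↔
      πi ≥ πj * (ra + (qa - ra) * (x : ℝ)) := by
  rcases hx with rfl | rfl
  · simp only [Nat.cast_zero, mul_zero, add_zero, ge_iff_le, sub_nonneg]
    rw [mul_comm πj]
    exact dpCuts_iff_of_off hπj.1 hqr.le
  · simp only [Nat.cast_one, mul_one, add_sub_cancel, ge_iff_le, sub_nonneg]
    rw [mul_comm πj]
    exact dpCuts_iff_of_on hπj.2 hqr.le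

/-- Equivalence of linearized DP constraints and the bilinear DP inequality
    at binary x. -/
theorem linearized_dp_equivalence
    (πi πj uj qa ra : ℝ) (x : ℕ)
    (hπj : 0 ≤ πj ∧ πj ≤ uj)
    (hq : 0 ≤ qa) (hqr : qa < ra) (hr : ra ≤ 1)
    (hx : x = 0 ∨ x = 1) :
    (πi - ra * πj ≥ -(ra - qa) * uj * (x : ℝ) ∧ πi - qa * πj ≥ 0) ↔
      πi ≥ πj * (ra + (qa - ra) * (x : ℝ)) :=
  linearized_dp_equivalence_general πi πj uj qa ra x hπj hqr hx
end

section
/- Validity of the general supermodular inequality for H_P at binary points: for any S ⊆ D and any x ∈ {0,1}^D with induced set S' = {a : x_a = 1}, h_P(S') ≥ h_P(S) − ∑_{a∈S} ρ_a(S\{a})·(1 − x_a) + ∑_{a∈D\S} ρ_a(∅)·x_a, where ρ_a(U) = h_P(U∪{a}) − h_P(U). Hence any (x, π) with π ≥ h_P(S') satisfies the linear inequality π ≥ h_P(S) − ∑_{a∈S} ρ_a(S\{a})(1 − x_a) + ∑_{a∈D\S} ρ_a(∅) x_a. -/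
/-!
Write `h_P(T) = C · ∏_{a ∈ P ∩ T} c_a` with `C = ∏_{a ∈ P} r_a ≥ 0` and `c_a = q_a / r_a ∈ [0, 1]`
on `D`; a nonnegative multiple of such a product is supermodular on subsets of `D`. For any
supermodular `f`, going down from `S` to `S ∩ S'` one element `a ∈ S \ S'` at a time loses at most
`ρ_a(S \ {a})` per step, and going up from `S ∩ S'` to `S'` one element `a ∈ S' \ S` at a time
gains at least `ρ_a(∅)` per step. At a binary point `x` the two sums of the inequality are exactly
these losses and gains.
-/

open Finset

section

variable {ι β : Type*} [DecidableEq ι]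

def SupermodularOn [Add β] [LE β] (f : Finset ι → β) (D : Finset ι) : Prop :=
  ∀ X ⊆ D, ∀ Y ⊆ D, f X + f Y ≤ f (X ∪ Y) + f (X ∩ Y)

namespace SupermodularOn

theorem comp_inter [Add β] [LE β] {f : Finset ι → β} {D : Finset ι} (hf : SupermodularOn f D)
    (P : Finset ι) :
    SupermodularOn (fun T => f (P ∩ T)) D := fun X hX Y hY => by
  have h := hf (P ∩ X) (inter_subset_right.trans hX) (P ∩ Y) (inter_subset_right.trans hY)
  rwa [← inter_union_distrib_left, ← inter_inter_distrib_left] at h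

theorem const_mul [Semiring β] [PartialOrder β] [IsOrderedRing β] {f : Finset ι → β}
    {D : Finset ι} (hf : SupermodularOn f D) {c : β} (hc : 0 ≤ c) :
    SupermodularOn (fun T => c * f T) D := fun X hX Y hY => by
  simpa only [mul_add] using mul_le_mul_of_nonneg_left (hf X hX Y hY) hc

section OrderedGroup

variable [AddCommGroup β] [PartialOrder β] [IsOrderedAddMonoid β]
  {f : Finset ι → β} {D : Finset ι}

theorem sub_sum_marginal_le_sdiff (hf : SupermodularOn f D) {S K : Finset ι} (hSD : S ⊆ D)
    (hKS : K ⊆ S) : f S - ∑ a ∈ K, (f S - f (S.erase a)) ≤ f (S \ K) := by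
  induction K using Finset.induction_on with
  | empty => simp
  | @insert a K haK ih =>
    have haS : a ∈ S := hKS (mem_insert_self a K)
    have ih := ih ((subset_insert a K).trans hKS)
    have hunion : S \ K ∪ S.erase a = S := by grind
    have hinter : S \ K ∩ S.erase a = S \ insert a K := by grind
    have hsuper := hf (S \ K) (sdiff_subset.trans hSD) (S.erase a) ((erase_subset a S).trans hSD)
    rw [hunion, hinter] at hsuper
    rw [sum_insert haK]
    calc f S - (f S - f (S.erase a) + ∑ b ∈ K, (f S - f (S.erase b)))
        = f S - ∑ b ∈ K, (f S - f (S.erase b)) + f (S.erase a) - f S := by abel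
      _ ≤ f (S \ K) + f (S.erase a) - f S := by gcongr
      _ ≤ f (S \ insert a K) := by
        rw [sub_le_iff_le_add]; simpa only [add_comm] using hsuper

theorem add_sum_marginal_le_union (hf : SupermodularOn f D) {T K : Finset ι} (hTD : T ⊆ D)
    (hKD : K ⊆ D) (hTK : Disjoint T K) : f T + ∑ a ∈ K, (f {a} - f ∅) ≤ f (T ∪ K) := by
  induction K using Finset.induction_on with
  | empty => simp
  | @insert a K haK ih =>
    have haT : a ∉ T := disjoint_right.mp hTK (mem_insert_self a K)
    have ih := ih ((subset_insert a K).trans hKD) (hTK.mono_right (subset_insert a K))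
    have hsuper := hf (T ∪ K) (union_subset hTD ((subset_insert a K).trans hKD))
      {a} (singleton_subset_iff.mpr (hKD (mem_insert_self a K)))
    rw [inter_singleton_of_notMem (notMem_union.mpr ⟨haT, haK⟩), union_singleton] at hsuper
    rw [sum_insert haK, union_insert]
    calc f T + (f {a} - f ∅ + ∑ b ∈ K, (f {b} - f ∅))
        = f T + ∑ b ∈ K, (f {b} - f ∅) + f {a} - f ∅ := by abel
      _ ≤ f (T ∪ K) + f {a} - f ∅ := by gcongr
      _ ≤ f (insert a (T ∪ K)) := sub_le_iff_le_add.mpr hsuper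

theorem sub_sum_add_sum_marginal_le (hf : SupermodularOn f D) {S S' : Finset ι} (hSD : S ⊆ D)
    (hS'D : S' ⊆ D) :
    f S - ∑ a ∈ S \ S', (f S - f (S.erase a)) + ∑ a ∈ S' \ S, (f {a} - f ∅) ≤ f S' := by
  have hdown := hf.sub_sum_marginal_le_sdiff hSD (sdiff_subset (s := S) (t := S'))
  have hup := hf.add_sum_marginal_le_union ((inter_subset_left (s₂ := S')).trans hSD)
    (sdiff_subset.trans hS'D) (disjoint_sdiff_self_right.mono_left inter_subset_left)
  have hS' : S ∩ S' ∪ S' \ S = S' := by grind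
  rw [sdiff_sdiff_self_left] at hdown
  rw [hS'] at hup
  calc f S - ∑ a ∈ S \ S', (f S - f (S.erase a)) + ∑ a ∈ S' \ S, (f {a} - f ∅)
      ≤ f (S ∩ S') + ∑ a ∈ S' \ S, (f {a} - f ∅) := by gcongr
    _ ≤ f S' := hup

end OrderedGroup

end SupermodularOn

theorem supermodularOn_prod {R : Type*} [CommRing R] [PartialOrder R] [IsOrderedRing R]
    {c : ι → R} {D : Finset ι} (hc : ∀ a ∈ D, 0 ≤ c a ∧ c a ≤ 1) :
    SupermodularOn (fun T => ∏ a ∈ T, c a) D := by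
  intro X hX Y hY
  have hc₀ : ∀ a ∈ D, 0 ≤ c a := fun a ha => (hc a ha).1
  have hc₁ : ∀ a ∈ D, c a ≤ 1 := fun a ha => (hc a ha).2
  have hdX : X \ Y ⊆ D := sdiff_subset.trans hX
  have hdY : Y \ X ⊆ D := sdiff_subset.trans hY
  have hX' := prod_sdiff (f := c) (inter_subset_left (s₁ := X) (s₂ := Y))
  have hY' := prod_sdiff (f := c) (inter_subset_right (s₁ := X) (s₂ := Y))
  have hU := prod_sdiff (f := c) (subset_union_right (s₁ := X) (s₂ := Y))
  rw [sdiff_inter_self_left] at hX'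
  rw [sdiff_inter_self_right] at hY'
  rw [union_sdiff_right] at hU
  -- the supermodularity defect is exactly this product
  have hdefect : 0 ≤ (∏ a ∈ X ∩ Y, c a) * (1 - ∏ a ∈ X \ Y, c a) * (1 - ∏ a ∈ Y \ X, c a) :=
    mul_nonneg (mul_nonneg (prod_nonneg fun a ha => hc₀ a (inter_subset_left.trans hX ha))
      (sub_nonneg.mpr (prod_le_one (fun a ha => hc₀ a (hdX ha)) fun a ha => hc₁ a (hdX ha))))
      (sub_nonneg.mpr (prod_le_one (fun a ha => hc₀ a (hdY ha)) fun a ha => hc₁ a (hdY ha)))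
  rw [← sub_nonneg]
  convert hdefect using 1
  dsimp only
  rw [← hU, ← hX', ← hY']
  ring

end

/-- Validity of the general supermodular inequality for H_P at binary points. -/
theorem supermodular_inequality_valid
    {ι : Type*} [DecidableEq ι]
    (A D P : Finset ι) (hD : D ⊆ A) (hP : P ⊆ A)
    (r q : ι → ℝ)
    (hr : ∀ a ∈ A, 0 < r a ∧ r a ≤ 1)
    (hq : ∀ a ∈ D, 0 ≤ q a ∧ q a < r a)
    (hPfun : Finset ι → ℝ)
    (hPdef : ∀ S : Finset ι,
      hPfun S = (∏ a ∈ P, r a) * ∏ a ∈ P ∩ S, (q a / r a))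
    (ρ : ι → Finset ι → ℝ)
    (hρ : ∀ a U, ρ a U = hPfun (insert a U) - hPfun U)
    (S : Finset ι) (hS : S ⊆ D)
    (x : ι → ℕ) (hx : ∀ a ∈ D, x a = 0 ∨ x a = 1)
    (S' : Finset ι) (hS' : S' = D.filter (fun a => x a = 1)) :
    hPfun S' ≥ hPfun S
        - (∑ a ∈ S, ρ a (S.erase a) * (1 - (x a : ℝ)))
        + (∑ a ∈ D \ S, ρ a ∅ * (x a : ℝ)) ∧
      ∀ π : ℝ, π ≥ hPfun S' →
        π ≥ hPfun S
          - (∑ a ∈ S, ρ a (S.erase a) * (1 - (x a : ℝ)))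
          + (∑ a ∈ D \ S, ρ a ∅ * (x a : ℝ)) := by
  have hc : ∀ a ∈ D, 0 ≤ q a / r a ∧ q a / r a ≤ 1 := fun a ha =>
    have hra := (hr a (hD ha)).1.le
    ⟨div_nonneg (hq a ha).1 hra, div_le_one_of_le₀ (hq a ha).2.le hra⟩
  have hf : SupermodularOn hPfun D := by
    rw [show hPfun = _ from funext hPdef]
    exact ((supermodularOn_prod hc).comp_inter P).const_mul
      (prod_nonneg fun a ha => (hr a (hP ha)).1.le)
  have hS'D : S' ⊆ D := hS' ▸ filter_subset _ D
  have hx' : ∀ a ∈ D, (x a : ℝ) = if a ∈ S' then 1 else 0 := fun a ha => by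
    rcases hx a ha with h | h <;> simp [hS', ha, h]
  have hloss : ∑ a ∈ S, ρ a (S.erase a) * (1 - (x a : ℝ))
      = ∑ a ∈ S \ S', (hPfun S - hPfun (S.erase a)) := by
    rw [sdiff_eq_filter, sum_filter]
    refine sum_congr rfl fun a ha => ?_
    rw [hx' a (hS ha), hρ, insert_erase ha]
    split_ifs <;> ring
  have hgain : ∑ a ∈ D \ S, ρ a ∅ * (x a : ℝ) = ∑ a ∈ S' \ S, (hPfun {a} - hPfun ∅) := by
    rw [show S' \ S = (D \ S).filter (· ∈ S') by grind, sum_filter]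
    refine sum_congr rfl fun a ha => ?_
    rw [hx' a (sdiff_subset ha), hρ, insert_empty]
    split_ifs <;> ring
  have key := hf.sub_sum_add_sum_marginal_le hS hS'D
  rw [hloss, hgain]
  exact ⟨key, fun π hπ => key.trans hπ⟩
end
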